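/- Let K be an algebraically closed field equipped with a nontrivial non-archimedean absolute value |·|. Let F ∈ K[x_0,…,x_N] be homogeneous of degree t ≥ 1 satisfying F(x_0,…,x_{N−1},0) = ∏_{i=0}^{N−1} x_i^{e_i} for some nonnegative integers e_i, and write F = ∑_{j=0}^{t} c_j(x_0,…,x_{N−1})·x_N^j, where each c_j is homogeneous of degree t−j. Let ‖c_j‖ denote the maximum of the absolute values of the coefficients of c_j (the Gauss norm). Then, for Z the zero locus of F in ℙ^N(K), one has λ(Z) = max_{1 ≤ j ≤ t} (1/j)·log⁺‖c_j‖. -/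

import Mathlib

/-!
Write `F(β', x) = ∑ c_j(β') x^j` with `β' ∈ K^N`. On the unit torus `|β'_i| = 1` the constant
term `c_0(β') = ∏ β'_i^{e_i}` is a unit, so a zero `(β', β_N)` of `F` forces, by the ultrametric
inequality, `1 ≤ |c_j(β')| |β_N|^j ≤ ‖c_j‖ |β_N|^j` for some `1 ≤ j ≤ t`: this is the upper bound.

Conversely, over an algebraically closed field the Gauss norm of a polynomial is attained on the
unit torus (by Lagrange interpolation at roots of unity of order `m` with `|m| = 1`, one variable
at a time). At such a point `β'` for `c_j`, the polynomial `g(x) = F(β', x)` has `|g_0| = 1` and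
`|g_j| = ‖c_j‖`, and the Gauss norm of `g = lc(g) ∏ (x - r)` at the radius of its smallest root
`r` gives `‖c_j‖ |r|^j ≤ 1`, hence the lower bound.
-/

open MvPolynomial Filter Topology
open scoped ENNReal

noncomputable section

/-- Multi-indices `I = (I_0, …, I_N)` of nonnegative integers with `|I| = d` and
`0 < I_N < d` (the set `Ind*(N,d)`). -/
abbrev MIdx (N d : ℕ) : Type :=
  {I : Fin (N + 1) → Fin (d + 1) //
    (∑ j, (I j : ℕ)) = d ∧ 0 < (I (Fin.last N) : ℕ) ∧ (I (Fin.last N) : ℕ) < d}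

/-- A coefficient tuple `a = (a_{i,I})` for `0 ≤ i < N` and `I ∈ Ind*(N,d)`. -/
abbrev Coeffs (N d : ℕ) (K : Type*) : Type _ := Fin N → MIdx N d → K

variable {K : Type*} [Field K]

/-- The homogeneous coordinate forms of the monic polynomial endomorphism `f_a`:
`f_i = x_i^d + ∑_{I} a_{i,I} x^I` for `i < N`, and `f_N = x_N^d`. -/
def fPoly (N d : ℕ) (a : Coeffs N d K) (i : Fin (N + 1)) : MvPolynomial (Fin (N + 1)) K :=
  if h : (i : ℕ) < N then
    X i ^ d + ∑ I : MIdx N d, C (a ⟨(i : ℕ), h⟩ I) * ∏ t, X t ^ (I.1 t : ℕ)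
  else X i ^ d

/-- `f_a` on homogeneous coordinate vectors. -/
def Fvec (N d : ℕ) (a : Coeffs N d K) (x : Fin (N + 1) → K) : Fin (N + 1) → K :=
  fun i => eval x (fPoly N d a i)

/-- The Jacobian form `J_{f_a} = det(∂f_i/∂x_j)_{0 ≤ i,j ≤ N-1}`. -/
def Jpoly (N d : ℕ) (a : Coeffs N d K) : MvPolynomial (Fin (N + 1)) K :=
  (Matrix.of fun i j : Fin N =>
    pderiv (Fin.castSucc j) (fPoly N d a (Fin.castSucc i))).det

/-- The critical locus `C_{f_a} ⊆ ℙ^N(K)`. -/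
def critLocus (N d : ℕ) (a : Coeffs N d K) : Set (Projectivization K (Fin (N + 1) → K)) :=
  {P | ∃ (x : Fin (N + 1) → K) (hx : x ≠ 0),
        eval x (Jpoly N d a) = 0 ∧ P = Projectivization.mk K x hx}

/-- Image of a subset of `ℙ^N(K)` under the projective map induced by a
homogeneous polynomial map `F` on coordinates. -/
def imSet {K : Type*} [Field K] (N : ℕ) (F : (Fin (N + 1) → K) → (Fin (N + 1) → K))
    (S : Set (Projectivization K (Fin (N + 1) → K))) :
    Set (Projectivization K (Fin (N + 1) → K)) :=
  {Q | ∃ (x : Fin (N + 1) → K) (hx : x ≠ 0) (hFx : F x ≠ 0),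
        Projectivization.mk K x hx ∈ S ∧ Q = Projectivization.mk K (F x) hFx}

/-- `f_a^n(C_{f_a})`, the image of the critical locus under the `n`-th iterate. -/
def critImage (N d : ℕ) (a : Coeffs N d K) (n : ℕ) :
    Set (Projectivization K (Fin (N + 1) → K)) :=
  (imSet N (Fvec N d a))^[n] (critLocus N d a)

/-- `f_a` is post-critically finite: the sets `f_a^n(C_{f_a})` take only finitely
many distinct values. -/
def IsPCF (N d : ℕ) (a : Coeffs N d K) : Prop :=
  (Set.range fun n => critImage N d a n).Finite

/-- `λ(Z) = log⁺ sup {|β_N|⁻¹ : |β_0| = ⋯ = |β_{N-1}| = 1, β_N ≠ 0, [β] ∈ Z} ∈ [0,∞]`,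
with `sup ∅ = 0`. -/
def lam (N : ℕ) (v : AbsoluteValue K ℝ)
    (Z : Set (Projectivization K (Fin (N + 1) → K))) : ℝ≥0∞ :=
  ⨆ (β : Fin (N + 1) → K) (hβ : β ≠ 0)
    (_ : ∀ j : Fin N, v (β (Fin.castSucc j)) = 1)
    (_ : β (Fin.last N) ≠ 0)
    (_ : Projectivization.mk K β hβ ∈ Z),
    ENNReal.ofReal (Real.log ((v (β (Fin.last N)))⁻¹))

/-- `B(f_a) = log⁺ max_{i,I} |a_{i,I}|^{1/I_N}`. -/
def Bnorm (N d : ℕ) (v : AbsoluteValue K ℝ) (a : Coeffs N d K) : ℝ :=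
  max 0 (⨆ (i : Fin N) (I : MIdx N d),
    Real.log (v (a i I) ^ ((((I.1 (Fin.last N) : ℕ)) : ℝ))⁻¹))

end

theorem Real.log_le_log_div_of_pow_le {y G : ℝ} {j : ℕ} (hj : 0 < j) (hy : 0 < y)
    (h : y ^ j ≤ G) : Real.log y ≤ Real.log G / j := by
  rw [le_div_iff₀ (by exact_mod_cast hj), mul_comm, ← Real.log_pow]
  exact Real.log_le_log (pow_pos hy j) h

theorem Real.log_div_le_log_of_le_pow {y G : ℝ} {j : ℕ} (hj : 0 < j) (hG : 0 < G)
    (h : G ≤ y ^ j) : Real.log G / j ≤ Real.log y := by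
  rw [div_le_iff₀ (by exact_mod_cast hj), mul_comm, ← Real.log_pow]
  exact Real.log_le_log hG h

namespace AbsoluteValue

variable {K : Type*} [Field K] {v : AbsoluteValue K ℝ}

theorem sum_le_of_forall_le (hna : IsNonarchimedean v) {ι : Type*} {s : Finset ι} {f : ι → K}
    {M : ℝ} (hM : 0 ≤ M) (h : ∀ i ∈ s, v (f i) ≤ M) : v (∑ i ∈ s, f i) ≤ M := by
  rcases s.eq_empty_or_nonempty with rfl | hs
  · simpa using hM
  obtain ⟨i, hi, hle⟩ := hna.finset_image_add_of_nonempty f hs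
  exact hle.trans (h i hi)

theorem exists_inv_pow_le_of_sum_eq_zero (hna : IsNonarchimedean v) {t : ℕ} {a : ℕ → K}
    (ha0 : v (a 0) = 1) {x : K} (hx : x ≠ 0) (hsum : ∑ j ∈ Finset.range (t + 1), a j * x ^ j = 0) :
    ∃ j ∈ Finset.Icc 1 t, (v x)⁻¹ ^ j ≤ v (a j) := by
  rw [Finset.sum_range_succ', pow_zero, mul_one, add_eq_zero_iff_eq_neg] at hsum
  have hne : ∑ i ∈ Finset.range t, a (i + 1) * x ^ (i + 1) ≠ 0 := by
    intro h
    rw [h, zero_eq_neg] at hsum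
    rw [hsum, map_zero] at ha0
    exact zero_ne_one ha0
  obtain ⟨i, hi, hle⟩ := hna.finset_image_add_of_nonempty _ (Finset.nonempty_of_sum_ne_zero hne)
  refine ⟨i + 1, Finset.mem_Icc.2 ⟨i.succ_pos, Finset.mem_range.1 hi⟩, ?_⟩
  rw [inv_pow, inv_le_iff_one_le_mul₀ (pow_pos (v.pos hx) _), ← v.map_pow, ← v.map_mul]
  calc 1 = v (∑ i ∈ Finset.range t, a (i + 1) * x ^ (i + 1)) := by rw [hsum, map_neg_eq_map, ha0]
    _ ≤ _ := hle

theorem exists_natCast_eq_one (hna : IsNonarchimedean v) (n : ℕ) :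
    ∃ m : ℕ, n ≤ m ∧ v m = 1 := by
  have h : 1 ≤ max (v ((n + 1 : ℕ) : K)) (v (n : K)) := by
    simpa using hna ((n + 1 : ℕ) : K) (-(n : K))
  rcases le_max_iff.1 h with h | h
  · exact ⟨n + 1, n.le_succ, le_antisymm hna.apply_natCast_le_one h⟩
  · exact ⟨n, le_rfl, le_antisymm hna.apply_natCast_le_one h⟩

theorem eq_one_of_pow_eq_one {m : ℕ} (hm : m ≠ 0) {δ : K} (hδ : δ ^ m = 1) : v δ = 1 :=
  (pow_eq_one_iff_of_nonneg (v.nonneg δ) hm).1 (by rw [← map_pow, hδ, map_one])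

/-- Since `∑_{i<m} δ^i = 0`, the integer `m` equals `∑_{i<m} (1 - δ^i)`, a multiple of `1 - δ`
with a cofactor of absolute value at most `1`. -/
theorem one_sub_eq_one_of_pow_eq_one (hna : IsNonarchimedean v) {m : ℕ} (hm : v m = 1) {δ : K}
    (hδm : δ ^ m = 1) (hδ : δ ≠ 1) : v (1 - δ) = 1 := by
  have hm0 : m ≠ 0 := by rintro rfl; simp at hm
  have hvδ : v δ = 1 := eq_one_of_pow_eq_one hm0 hδm
  have hpow : ∀ i, v (1 - δ ^ i) ≤ v (1 - δ) := fun i => by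
    rw [← mul_neg_geom_sum, v.map_mul]
    refine mul_le_of_le_one_right (v.nonneg _) (sum_le_of_forall_le hna zero_le_one fun k _ => ?_)
    simp [hvδ]
  have hsum : (m : K) = ∑ i ∈ Finset.range m, (1 - δ ^ i) := by
    simp [Finset.sum_sub_distrib, geom_sum_eq hδ, hδm]
  refine le_antisymm ?_ ?_
  · calc v (1 - δ) ≤ max (v 1) (v (-δ)) := by rw [sub_eq_add_neg]; exact hna _ _
      _ = 1 := by simp [hvδ]
  · rw [← hm, hsum]
    exact sum_le_of_forall_le hna (v.nonneg _) fun i _ => hpow i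

/-- The `m`-th roots of unity, for `m ≥ n` with `|m| = 1`, are `m` units at mutual distance `1`. -/
theorem exists_finset_eq_one_and_sub_eq_one [IsAlgClosed K] (hna : IsNonarchimedean v) (n : ℕ) :
    ∃ S : Finset K, n ≤ S.card ∧ ∀ x ∈ S, v x = 1 ∧ ∀ y ∈ S, x ≠ y → v (x - y) = 1 := by
  obtain ⟨m, hnm, hm⟩ := exists_natCast_eq_one hna n
  have hm0 : m ≠ 0 := by rintro rfl; simp at hm
  have : NeZero (m : K) := ⟨fun h => by simp [h] at hm⟩
  obtain ⟨μ, hμ⟩ := IsAlgClosed.exists_root (Polynomial.cyclotomic m K)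
    (Polynomial.degree_cyclotomic_pos m K (Nat.pos_of_ne_zero hm0)).ne'
  refine ⟨Polynomial.nthRootsFinset m (1 : K), ?_, fun x hx => ?_⟩
  · rwa [(Polynomial.isRoot_cyclotomic_iff.1 hμ).card_nthRootsFinset]
  have hxm := (Polynomial.mem_nthRootsFinset (Nat.pos_of_ne_zero hm0) _).1 hx
  refine ⟨eq_one_of_pow_eq_one hm0 hxm, fun y hy hxy => ?_⟩
  have hym := (Polynomial.mem_nthRootsFinset (Nat.pos_of_ne_zero hm0) _).1 hy
  have hy0 : y ≠ 0 := by rintro rfl; simp [hm0] at hym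
  have hxy' : x - y = -(y * (1 - x / y)) := by field_simp; ring
  rw [hxy', map_neg_eq_map, v.map_mul, eq_one_of_pow_eq_one hm0 hym,
    one_sub_eq_one_of_pow_eq_one hna hm (by rw [div_pow, hxm, hym, div_one])
      (by rwa [Ne, div_eq_one_iff_eq hy0]), mul_one]

end AbsoluteValue

namespace Polynomial

theorem gaussNorm_le_of_forall_le {R F : Type*} [Semiring R] [FunLike F R ℝ] (v : F) {c M : ℝ}
    {p : R[X]} (hM : 0 ≤ M) (h : ∀ i, v (p.coeff i) * c ^ i ≤ M) : p.gaussNorm v c ≤ M := by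
  unfold gaussNorm
  split_ifs
  exacts [Finset.sup'_le _ _ fun i _ => h i, hM]

@[simp]
theorem gaussNorm_one {R F : Type*} [Semiring R] [FunLike F R ℝ] [ZeroHomClass F R ℝ]
    [OneHomClass F R ℝ] (v : F) (c : ℝ) : (1 : R[X]).gaussNorm v c = 1 := by
  rw [← C_1, gaussNorm_C, map_one]

variable {K : Type*} [Field K] {v : AbsoluteValue K ℝ}

theorem abv_eval_le_gaussNorm (hna : IsNonarchimedean v) (p : K[X]) {u : K} (hu : v u ≤ 1) :
    v (p.eval u) ≤ p.gaussNorm v 1 := by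
  rw [eval_eq_sum_range]
  refine AbsoluteValue.sum_le_of_forall_le hna (gaussNorm_nonneg _ _ zero_le_one) fun i _ => ?_
  calc v (p.coeff i * u ^ i) ≤ v (p.coeff i) * 1 ^ i := by
        rw [v.map_mul, v.map_pow]
        gcongr
    _ ≤ p.gaussNorm v 1 := le_gaussNorm v p zero_le_one i

theorem gaussNorm_X_sub_C_le (hna : IsNonarchimedean v) {c : ℝ} (hc : 0 ≤ c) (y : K) :
    (X - C y).gaussNorm v c ≤ max c (v y) := by
  calc (X - C y).gaussNorm v c ≤ max ((X : K[X]).gaussNorm v c) ((C (-y)).gaussNorm v c) := by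
        rw [sub_eq_add_neg, ← C_neg]
        exact isNonarchimedean_gaussNorm v hna hc _ _
    _ = max c (v y) := by simp [← monomial_one_one_eq_X, -map_neg]

theorem gaussNorm_basis_le_one (hna : IsNonarchimedean v) [DecidableEq K] {S : Finset K}
    (hS : ∀ x ∈ S, v x = 1 ∧ ∀ y ∈ S, x ≠ y → v (x - y) = 1) {x : K} (hx : x ∈ S) :
    (Lagrange.basis S id x).gaussNorm v 1 ≤ 1 := by
  refine Finset.prod_induction _ (fun q : K[X] => q.gaussNorm v 1 ≤ 1)
    (fun p q hp hq => (gaussNorm_mul_le v hna p q zero_le_one).trans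
      (mul_le_one₀ hp (gaussNorm_nonneg _ _ zero_le_one) hq))
    (by rw [gaussNorm_one]) fun y hy => ?_
  obtain ⟨hne, hyS⟩ := Finset.mem_erase.1 hy
  rw [Lagrange.basisDivisor, gaussNorm_mul hna one_pos, gaussNorm_C, map_inv₀, id, id,
    (hS x hx).2 y hyS hne.symm, inv_one, one_mul]
  simpa [(hS y hyS).1] using gaussNorm_X_sub_C_le hna zero_le_one y

/-- Lagrange interpolation at `deg p + 1` units at mutual distance `1` bounds the Gauss norm
by the largest value. -/
theorem exists_abv_eval_eq_gaussNorm [IsAlgClosed K] (hna : IsNonarchimedean v) (p : K[X]) :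
    ∃ u, v u = 1 ∧ v (p.eval u) = p.gaussNorm v 1 := by
  classical
  obtain ⟨S, hcard, hS⟩ := AbsoluteValue.exists_finset_eq_one_and_sub_eq_one hna (p.natDegree + 1)
  have hdeg : p.degree < S.card :=
    degree_le_natDegree.trans_lt (by exact_mod_cast Nat.lt_of_succ_le hcard)
  have hSne : S.Nonempty := Finset.card_pos.1 (by omega)
  obtain ⟨u, hu, hle⟩ := (isNonarchimedean_gaussNorm v hna zero_le_one).finset_image_add_of_nonempty
    (fun x => C (p.eval x) * Lagrange.basis S id x) hSne
  refine ⟨u, (hS u hu).1, le_antisymm (abv_eval_le_gaussNorm hna p (hS u hu).1.le) ?_⟩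
  calc p.gaussNorm v 1
      = (∑ x ∈ S, C (p.eval x) * Lagrange.basis S id x).gaussNorm v 1 := by
        conv_lhs => rw [Lagrange.eq_interpolate (Set.injOn_id _) hdeg, Lagrange.interpolate_apply]
        rfl
    _ ≤ v (p.eval u) * (Lagrange.basis S id u).gaussNorm v 1 := by
        rwa [← gaussNorm_C v 1 (p.eval u), ← gaussNorm_mul hna one_pos]
    _ ≤ v (p.eval u) := mul_le_of_le_one_right (v.nonneg _) (gaussNorm_basis_le_one hna hS hu)

theorem gaussNorm_prod_X_sub_C_le (hna : IsNonarchimedean v) {c : ℝ} (hc : 0 ≤ c)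
    (s : Multiset K) (hs : ∀ r ∈ s, c ≤ v r) :
    ((s.map fun r => X - C r).prod).gaussNorm v c ≤ (s.map v).prod := by
  induction s using Multiset.induction_on with
  | empty => simp
  | cons a s ih =>
    simp only [Multiset.map_cons, Multiset.prod_cons]
    refine (gaussNorm_mul_le v hna _ _ hc).trans (mul_le_mul ?_ ?_ (gaussNorm_nonneg _ _ hc)
      (v.nonneg a))
    · exact (gaussNorm_X_sub_C_le hna hc a).trans
        (max_le (hs a (Multiset.mem_cons_self a s)) le_rfl)
    · exact ih fun r hr => hs r (Multiset.mem_cons_of_mem hr)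

/-- Evaluate the Gauss norm at the radius `ρ` of the smallest root: each factor `X - r` of
`g` then has Gauss norm `|r|`, so `|g_j| ρ^j ≤ |lc g| ∏ |r| = |g_0|`. -/
theorem exists_isRoot_abv_coeff_mul_pow_le [IsAlgClosed K] (hna : IsNonarchimedean v) {g : K[X]}
    (hg0 : g.coeff 0 ≠ 0) {j : ℕ} (hj : 0 < j) (hgj : g.coeff j ≠ 0) :
    ∃ r, g.IsRoot r ∧ r ≠ 0 ∧ v (g.coeff j) * v r ^ j ≤ v (g.coeff 0) := by
  classical
  have hroot_ne : ∀ r ∈ g.roots, r ≠ 0 := by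
    rintro r hr rfl
    exact hg0 (by rw [coeff_zero_eq_eval_zero]; exact isRoot_of_mem_roots hr)
  have hroots : g.roots.toFinset.Nonempty := by
    rw [Multiset.toFinset_nonempty, ← Multiset.card_pos, IsAlgClosed.card_roots_eq_natDegree]
    exact hj.trans_le (le_natDegree_of_ne_zero hgj)
  obtain ⟨r₀, hr₀, hmin⟩ := g.roots.toFinset.exists_min_image v hroots
  rw [Multiset.mem_toFinset] at hr₀
  refine ⟨r₀, isRoot_of_mem_roots hr₀, hroot_ne r₀ hr₀, ?_⟩
  have hfac := C_leadingCoeff_mul_prod_multiset_X_sub_C (IsAlgClosed.card_roots_eq_natDegree (p := g))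
  have hcoeff0 : v (g.coeff 0) = v g.leadingCoeff * (g.roots.map v).prod := by
    conv_lhs => rw [coeff_zero_eq_eval_zero, ← hfac]
    simp [eval_multiset_prod, map_multiset_prod, Multiset.map_map]
  calc v (g.coeff j) * v r₀ ^ j ≤ g.gaussNorm v (v r₀) := le_gaussNorm v g (v.nonneg _) j
    _ = v g.leadingCoeff * ((g.roots.map fun r => X - C r).prod).gaussNorm v (v r₀) := by
        conv_lhs => rw [← hfac]
        rw [gaussNorm_mul hna (v.pos (hroot_ne r₀ hr₀)), gaussNorm_C]
    _ ≤ v (g.coeff 0) := by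
        rw [hcoeff0]
        exact mul_le_mul_of_nonneg_left (gaussNorm_prod_X_sub_C_le hna (v.nonneg _) _
          fun r hr => hmin r (Multiset.mem_toFinset.2 hr)) (v.nonneg _)

end Polynomial

namespace MvPolynomial

section GaussNorm

variable {σ R : Type*} [CommSemiring R] (v : AbsoluteValue R ℝ)

noncomputable def gaussNorm (p : MvPolynomial σ R) : ℝ := ⨆ m, v (coeff m p)

variable {v}

theorem exists_forall_abv_coeff_le (p : MvPolynomial σ R) :
    ∃ m₀, ∀ m, v (coeff m p) ≤ v (coeff m₀ p) := by
  classical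
  obtain ⟨m₀, -, hmax⟩ := (insert 0 p.support).exists_max_image (fun m => v (coeff m p))
    (Finset.insert_nonempty _ _)
  refine ⟨m₀, fun m => ?_⟩
  by_cases hm : m ∈ p.support
  · exact hmax m (Finset.mem_insert_of_mem hm)
  · rw [notMem_support_iff.1 hm, map_zero]
    exact v.nonneg _

theorem abv_coeff_le_gaussNorm (p : MvPolynomial σ R) (m : σ →₀ ℕ) :
    v (coeff m p) ≤ p.gaussNorm v :=
  let ⟨_, h⟩ := exists_forall_abv_coeff_le (v := v) p
  le_ciSup ⟨_, Set.forall_mem_range.2 h⟩ m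

theorem exists_gaussNorm_eq_abv_coeff (p : MvPolynomial σ R) :
    ∃ m, p.gaussNorm v = v (coeff m p) := by
  obtain ⟨m₀, h⟩ := exists_forall_abv_coeff_le (v := v) p
  exact ⟨m₀, le_antisymm (ciSup_le h) (abv_coeff_le_gaussNorm p m₀)⟩

theorem gaussNorm_le {p : MvPolynomial σ R} {M : ℝ} (h : ∀ m, v (coeff m p) ≤ M) :
    p.gaussNorm v ≤ M :=
  ciSup_le h

theorem gaussNorm_nonneg (p : MvPolynomial σ R) : 0 ≤ p.gaussNorm v :=
  (v.nonneg _).trans (abv_coeff_le_gaussNorm p 0)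

theorem gaussNorm_C (a : R) : (C a : MvPolynomial σ R).gaussNorm v = v a := by
  classical
  refine le_antisymm (gaussNorm_le fun m => ?_) (by simpa using abv_coeff_le_gaussNorm (C a) 0)
  rw [coeff_C]
  split_ifs
  exacts [le_rfl, by simp]

theorem iSup_mem_support_abv_coeff (p : MvPolynomial σ R) :
    ⨆ m ∈ p.support, v (coeff m p) = p.gaussNorm v := by
  refine iSup_congr fun m => ?_
  by_cases hm : m ∈ p.support
  · simp [hm]
  · simp [hm, notMem_support_iff.1 hm]

theorem gaussNorm_coeff_finSuccEquiv_le {n : ℕ} (p : MvPolynomial (Fin (n + 1)) R) (k : ℕ) :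
    ((finSuccEquiv R n p).coeff k).gaussNorm v ≤ p.gaussNorm v :=
  gaussNorm_le fun m => by
    rw [finSuccEquiv_coeff_coeff]
    exact abv_coeff_le_gaussNorm p _

theorem exists_gaussNorm_coeff_finSuccEquiv_eq {n : ℕ} (p : MvPolynomial (Fin (n + 1)) R) :
    ∃ k, ((finSuccEquiv R n p).coeff k).gaussNorm v = p.gaussNorm v := by
  obtain ⟨m, hm⟩ := exists_gaussNorm_eq_abv_coeff (v := v) p
  refine ⟨m 0, le_antisymm (gaussNorm_coeff_finSuccEquiv_le p _) ?_⟩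
  rw [hm, ← Finsupp.cons_tail m, ← finSuccEquiv_coeff_coeff, Finsupp.cons_tail]
  exact abv_coeff_le_gaussNorm _ _

end GaussNorm

variable {K : Type*} [Field K] {v : AbsoluteValue K ℝ}

theorem abv_eval_le_gaussNorm {σ : Type*} (hna : IsNonarchimedean v) (p : MvPolynomial σ K)
    {x : σ → K} (hx : ∀ i, v (x i) ≤ 1) : v (eval x p) ≤ p.gaussNorm v := by
  rw [eval_eq]
  refine AbsoluteValue.sum_le_of_forall_le hna (gaussNorm_nonneg p) fun m _ => ?_
  rw [v.map_mul, map_prod]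
  refine (mul_le_of_le_one_right (v.nonneg _) (Finset.prod_le_one (fun _ _ => v.nonneg _)
    fun i _ => ?_)).trans (abv_coeff_le_gaussNorm p m)
  rw [v.map_pow]
  exact pow_le_one₀ (v.nonneg _) (hx i)

/-- Induct on the number of variables: the Gauss norm of `p` is that of one coefficient `p_k`
of `X_0 ^ k`; put the other variables at a point of the torus where `|p_k|` attains its Gauss
norm, then choose `X_0` by the one-variable case. -/
theorem exists_abv_eval_eq_gaussNorm [IsAlgClosed K] (hna : IsNonarchimedean v) {n : ℕ}
    (p : MvPolynomial (Fin n) K) : ∃ β : Fin n → K, (∀ i, v (β i) = 1) ∧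
      v (eval β p) = p.gaussNorm v := by
  induction n with
  | zero =>
    obtain ⟨a, rfl⟩ := C_surjective (Fin 0) p
    exact ⟨finZeroElim, finZeroElim, by rw [eval_C, gaussNorm_C]⟩
  | succ n ih =>
    obtain ⟨k, hk⟩ := exists_gaussNorm_coeff_finSuccEquiv_eq (v := v) p
    obtain ⟨β', hβ', hβ'k⟩ := ih ((finSuccEquiv K n p).coeff k)
    set g := (finSuccEquiv K n p).map (eval β')
    have hg : g.gaussNorm v 1 = p.gaussNorm v := by
      refine le_antisymm (Polynomial.gaussNorm_le_of_forall_le v (gaussNorm_nonneg p)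
        fun i => ?_) ?_
      · rw [Polynomial.coeff_map, one_pow, mul_one]
        exact (abv_eval_le_gaussNorm hna _ fun j => (hβ' j).le).trans
          (gaussNorm_coeff_finSuccEquiv_le p i)
      · simpa [g, hβ'k, hk] using Polynomial.le_gaussNorm v g zero_le_one k
    obtain ⟨u, hu, hgu⟩ := Polynomial.exists_abv_eval_eq_gaussNorm hna g
    exact ⟨Fin.cons u β', Fin.cases hu hβ', by rw [eval_eq_eval_mv_eval', hgu, hg]⟩

theorem IsHomogeneous.eval_smul {σ R : Type*} [CommSemiring R] {F : MvPolynomial σ R} {t : ℕ}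
    (hF : F.IsHomogeneous t) (a : R) (x : σ → R) :
    eval (a • x) F = a ^ t * eval x F := by
  rw [eval_eq, eval_eq, Finset.mul_sum]
  refine Finset.sum_congr rfl fun d hd => ?_
  have hdeg : ∑ i ∈ d.support, d i = t := by
    simp [← hF (mem_support_iff.1 hd), Finsupp.weight_apply, Finsupp.sum]
  simp_rw [Pi.smul_apply, smul_eq_mul, mul_pow, Finset.prod_mul_distrib,
    Finset.prod_pow_eq_pow_sum, hdeg]
  ring

section Snoc

variable {R : Type*} [CommSemiring R] {N : ℕ}

theorem eval_snoc_sum_rename_mul_pow (c : ℕ → MvPolynomial (Fin N) R) (s : Finset ℕ)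
    (β : Fin N → R) (x : R) :
    eval (Fin.snoc β x) (∑ j ∈ s, rename Fin.castSucc (c j) * X (Fin.last N) ^ j) =
      ∑ j ∈ s, eval β (c j) * x ^ j := by
  simp [eval_rename, Function.comp_def]

theorem eval_aeval_eq_eval_snoc_zero (F : MvPolynomial (Fin (N + 1)) R) (β : Fin N → R) :
    eval β (aeval (fun j : Fin (N + 1) =>
        if h : (j : ℕ) < N then (X ⟨(j : ℕ), h⟩ : MvPolynomial (Fin N) R) else 0) F) =
      eval (Fin.snoc β 0) F := by
  change eval β (bind₁ _ F) = _
  rw [eval, eval₂Hom_bind₁]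
  congr 2
  funext j
  induction j using Fin.lastCases <;> simp

end Snoc

end MvPolynomial

section ProjectiveZeroLocus

variable {K : Type*} [Field K]

def projZeroLocus {σ : Type*} (F : MvPolynomial σ K) : Set (Projectivization K (σ → K)) :=
  {P | ∃ (x : σ → K) (hx : x ≠ 0), eval x F = 0 ∧ P = Projectivization.mk K x hx}

theorem mk_mem_projZeroLocus_iff {σ : Type*} {F : MvPolynomial σ K} {t : ℕ}
    (hF : F.IsHomogeneous t) {x : σ → K} (hx : x ≠ 0) :
    Projectivization.mk K x hx ∈ projZeroLocus F ↔ eval x F = 0 := by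
  refine ⟨fun ⟨y, hy, hFy, hxy⟩ => ?_, fun h => ⟨x, hx, h, rfl⟩⟩
  obtain ⟨a, rfl⟩ := (Projectivization.mk_eq_mk_iff K x y hx hy).1 hxy
  rw [Units.smul_def, hF.eval_smul, hFy, mul_zero]

end ProjectiveZeroLocus

section Lam

variable {K : Type*} [Field K] {N : ℕ} {v : AbsoluteValue K ℝ}
  {Z : Set (Projectivization K (Fin (N + 1) → K))}

theorem lam_le {M : ℝ≥0∞} (h : ∀ (β : Fin (N + 1) → K) (hβ : β ≠ 0),
    (∀ j : Fin N, v (β (Fin.castSucc j)) = 1) → β (Fin.last N) ≠ 0 →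
      Projectivization.mk K β hβ ∈ Z → ENNReal.ofReal (Real.log (v (β (Fin.last N)))⁻¹) ≤ M) :
    lam N v Z ≤ M :=
  iSup_le fun β => iSup_le fun hβ => iSup_le fun hunit => iSup_le fun hlast => iSup_le
    fun hZ => h β hβ hunit hlast hZ

theorem le_lam {β : Fin (N + 1) → K} (hβ : β ≠ 0) (hunit : ∀ j : Fin N, v (β (Fin.castSucc j)) = 1)
    (hlast : β (Fin.last N) ≠ 0) (hZ : Projectivization.mk K β hβ ∈ Z) :
    ENNReal.ofReal (Real.log (v (β (Fin.last N)))⁻¹) ≤ lam N v Z :=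
  le_iSup_of_le β <| le_iSup_of_le hβ <| le_iSup_of_le hunit <| le_iSup_of_le hlast <|
    le_iSup_of_le hZ le_rfl

variable {F : MvPolynomial (Fin (N + 1)) K} {t : ℕ} {c : ℕ → MvPolynomial (Fin N) K}

theorem lam_projZeroLocus_le (hna : IsNonarchimedean v) (hF : F.IsHomogeneous t)
    (hFc : ∀ β x, eval (Fin.snoc β x) F = ∑ j ∈ Finset.range (t + 1), eval β (c j) * x ^ j)
    (hc0 : ∀ β : Fin N → K, (∀ i, v (β i) = 1) → v (eval β (c 0)) = 1) :
    lam N v (projZeroLocus F) ≤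
      ⨆ j ∈ Finset.Icc 1 t, ENNReal.ofReal (Real.log ((c j).gaussNorm v) / j) := by
  refine lam_le fun β hβ hunit hlast hZ => ?_
  rw [mk_mem_projZeroLocus_iff hF] at hZ
  have hsum := hFc (Fin.init β) (β (Fin.last N))
  rw [Fin.snoc_init_self, hZ] at hsum
  obtain ⟨j, hj, hle⟩ :=
    AbsoluteValue.exists_inv_pow_le_of_sum_eq_zero hna (hc0 _ hunit) hlast hsum.symm
  refine le_iSup₂_of_le j hj (ENNReal.ofReal_le_ofReal ?_)
  exact Real.log_le_log_div_of_pow_le (Finset.mem_Icc.1 hj).1 (inv_pos.2 (v.pos hlast))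
    (hle.trans (abv_eval_le_gaussNorm hna _ fun i => (hunit i).le))

theorem le_lam_projZeroLocus [IsAlgClosed K] (hna : IsNonarchimedean v)
    (hFc : ∀ β x, eval (Fin.snoc β x) F = ∑ j ∈ Finset.range (t + 1), eval β (c j) * x ^ j)
    (hc0 : ∀ β : Fin N → K, (∀ i, v (β i) = 1) → v (eval β (c 0)) = 1) :
    ⨆ j ∈ Finset.Icc 1 t, ENNReal.ofReal (Real.log ((c j).gaussNorm v) / j) ≤
      lam N v (projZeroLocus F) := by
  refine iSup₂_le fun j hj => ?_
  obtain ⟨hj1, hjt⟩ := Finset.mem_Icc.1 hj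
  rcases le_or_gt ((c j).gaussNorm v) 1 with hG | hG
  · rw [ENNReal.ofReal_eq_zero.2 (div_nonpos_of_nonpos_of_nonneg
      (Real.log_nonpos (gaussNorm_nonneg _) hG) j.cast_nonneg)]
    exact zero_le
  obtain ⟨β, hβ, hβj⟩ := exists_abv_eval_eq_gaussNorm hna (c j)
  set g : Polynomial K := ∑ k ∈ Finset.range (t + 1), Polynomial.monomial k (eval β (c k))
  have hg : ∀ k ≤ t, g.coeff k = eval β (c k) := fun k hk => by
    simp [g, Polynomial.finsetSum_coeff, Polynomial.coeff_monomial, Nat.lt_succ_of_le hk]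
  have hg0 : v (g.coeff 0) = 1 := by rw [hg 0 t.zero_le, hc0 β hβ]
  have hgj : v (g.coeff j) = (c j).gaussNorm v := by rw [hg j hjt, hβj]
  obtain ⟨r, hr, hr0, hle⟩ := Polynomial.exists_isRoot_abv_coeff_mul_pow_le hna
    (fun h => by rw [h, map_zero] at hg0; exact zero_ne_one hg0) hj1
    (fun h => by rw [h, map_zero] at hgj; linarith)
  set x : Fin (N + 1) → K := Fin.snoc β r
  have hFx : eval x F = 0 := by
    rw [hFc, ← hr.eq_zero]
    simp [g, Polynomial.eval_finsetSum]
  have hx : x ≠ 0 := fun h => hr0 (by simpa [x] using congrFun h (Fin.last N))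
  have hGr : (c j).gaussNorm v ≤ (v r)⁻¹ ^ j := by
    rw [inv_pow, ← one_div, le_div_iff₀ (pow_pos (v.pos hr0) j), ← hgj, ← hg0]
    exact hle
  refine le_trans ?_ (le_lam hx (by simpa [x] using hβ) (by simpa [x] using hr0) ⟨x, hx, hFx, rfl⟩)
  rw [show x (Fin.last N) = r from Fin.snoc_last _ _]
  exact ENNReal.ofReal_le_ofReal (Real.log_div_le_log_of_le_pow hj1 (one_pos.trans hG) hGr)

end Lam

theorem stmt13_general (N : ℕ) (K : Type*) [Field K] [IsAlgClosed K]
    (v : AbsoluteValue K ℝ) (hna : IsNonarchimedean (v : K → ℝ))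
    (t : ℕ) (F : MvPolynomial (Fin (N + 1)) K) (hFhom : F.IsHomogeneous t)
    (e : Fin N → ℕ)
    (hF0 : aeval (fun j : Fin (N + 1) =>
        if h : (j : ℕ) < N then (X ⟨(j : ℕ), h⟩ : MvPolynomial (Fin N) K) else 0) F =
      ∏ i : Fin N, X i ^ e i)
    (c : ℕ → MvPolynomial (Fin N) K)
    (hc : F = ∑ j ∈ Finset.range (t + 1),
      rename Fin.castSucc (c j) * X (Fin.last N) ^ j) :
    lam N v {P | ∃ (x : Fin (N + 1) → K) (hx : x ≠ 0),
        eval x F = 0 ∧ P = Projectivization.mk K x hx} =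
      ⨆ j ∈ Finset.Icc 1 t, ENNReal.ofReal
        (Real.log (⨆ m ∈ (c j).support, v (MvPolynomial.coeff m (c j))) / j) := by
  have hFc : ∀ β x, eval (Fin.snoc β x) F = ∑ j ∈ Finset.range (t + 1), eval β (c j) * x ^ j :=
    fun β x => by rw [hc, eval_snoc_sum_rename_mul_pow]
  have hc0 : ∀ β : Fin N → K, (∀ i, v (β i) = 1) → v (eval β (c 0)) = 1 := fun β hβ => by
    have h : eval β (c 0) = ∏ i, β i ^ e i := by
      have h := congrArg (eval β) hF0
      rw [eval_aeval_eq_eval_snoc_zero, hFc] at h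
      simpa [Finset.sum_range_succ'] using h
    simp [h, hβ]
  simp_rw [iSup_mem_support_abv_coeff]
  exact le_antisymm (lam_projZeroLocus_le hna hFhom hFc hc0) (le_lam_projZeroLocus hna hFc hc0)

/-- Over an algebraically closed field with a nontrivial non-archimedean
absolute value: if `F` is homogeneous of degree `t ≥ 1` with
`F(x_0,…,x_{N-1},0) = ∏ x_i^{e_i}`, and `F = ∑_{j≤t} c_j·x_N^j` with each `c_j`
homogeneous of degree `t-j`, then for `Z` the zero locus of `F`,
`λ(Z) = max_{1 ≤ j ≤ t} (1/j)·log⁺‖c_j‖` where `‖·‖` is the Gauss norm. -/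
theorem stmt13 (N : ℕ) (hN : 1 ≤ N) (K : Type*) [Field K] [IsAlgClosed K]
    (v : AbsoluteValue K ℝ) (hna : IsNonarchimedean (v : K → ℝ))
    (hnt : ∃ x : K, x ≠ 0 ∧ v x ≠ 1)
    (t : ℕ) (ht : 1 ≤ t) (F : MvPolynomial (Fin (N + 1)) K) (hFhom : F.IsHomogeneous t)
    (e : Fin N → ℕ)
    (hF0 : aeval (fun j : Fin (N + 1) =>
        if h : (j : ℕ) < N then (X ⟨(j : ℕ), h⟩ : MvPolynomial (Fin N) K) else 0) F =
      ∏ i : Fin N, X i ^ e i)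
    (c : ℕ → MvPolynomial (Fin N) K)
    (hc : F = ∑ j ∈ Finset.range (t + 1),
      rename Fin.castSucc (c j) * X (Fin.last N) ^ j)
    (hchom : ∀ j ≤ t, (c j).IsHomogeneous (t - j)) :
    lam N v {P | ∃ (x : Fin (N + 1) → K) (hx : x ≠ 0),
        eval x F = 0 ∧ P = Projectivization.mk K x hx} =
      ⨆ j ∈ Finset.Icc 1 t, ENNReal.ofReal
        (Real.log (⨆ m ∈ (c j).support, v (MvPolynomial.coeff m (c j))) / j) :=
  stmt13_general N K v hna t F hFhom e hF0 c hc
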